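/- Soundness of Åqvist's system E: every formula derivable in the proof system E (consisting of all propositional tautologies, the axiom schemata K: □(φ→ψ)→(□φ→□ψ), 4: □φ→□□φ, 5: ¬□φ→□¬□φ, COK: ○(ψ→χ/φ)→(○(ψ/φ)→○(χ/φ)), Id: ○(φ/φ), Sh: ○(χ/φ∧ψ)→○((ψ→χ)/φ), Abs: ○(ψ/φ)→□○(ψ/φ), Nec: □ψ→○(ψ/φ), Ext: □(φ↔ψ)→(○(χ/φ)↔○(χ/ψ)), closed under modus ponens and the necessitation rule: from ⊢φ infer ⊢□φ) is valid in the class of all preference models. -/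

import Mathlib

/-- Formulas of Åqvist's dyadic deontic logic **E**:
`φ ::= p | ¬φ | φ∧φ | □φ | ○(φ/φ)`.
`EForm.ob ψ φ` denotes `○(ψ/φ)` ("ψ is obligatory, given φ"). -/
inductive EForm : Type where
  | atom : ℕ → EForm
  | neg  : EForm → EForm
  | conj : EForm → EForm → EForm
  | box  : EForm → EForm
  | ob   : EForm → EForm → EForm
deriving DecidableEq

/-- Material implication, defined classically. -/
def EForm.impl (φ ψ : EForm) : EForm := .neg (.conj φ (.neg ψ))

/-- Biconditional. -/
def EForm.iff' (φ ψ : EForm) : EForm := .conj (φ.impl ψ) (ψ.impl φ)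

/-- A preference model `M = (W, ≽, V)`: a nonempty set of worlds, a betterness
relation, and a valuation. -/
structure PrefModel where
  W : Type
  ne : Nonempty W
  R : W → W → Prop
  V : ℕ → W → Prop

/-- Satisfaction `M,s ⊨ φ`. In particular
`M,s ⊨ ○(ψ/φ)` iff `opt_≽(‖φ‖) ⊆ ‖ψ‖`, where
`opt_≽(‖φ‖) = {w ∈ ‖φ‖ : ∀ y, (M,y ⊨ φ) → w ≽ y}`. -/
def PrefModel.sat (M : PrefModel) : M.W → EForm → Prop
  | s, .atom n   => M.V n s
  | s, .neg φ    => ¬ PrefModel.sat M s φ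
  | s, .conj φ ψ => PrefModel.sat M s φ ∧ PrefModel.sat M s ψ
  | _, .box φ    => ∀ t, PrefModel.sat M t φ
  | _, .ob ψ φ   => ∀ w, (PrefModel.sat M w φ ∧ ∀ y, PrefModel.sat M y φ → M.R w y) →
                     PrefModel.sat M w ψ

/-- Validity in the class of all preference models. -/
def EValid (φ : EForm) : Prop := ∀ (M : PrefModel) (s : M.W), M.sat s φ

/-- A Boolean evaluation: any assignment of truth values to formulas that
respects negation and conjunction (treating atoms, `□`- and `○`-formulas as
atomic). -/
def BoolEval (v : EForm → Prop) : Prop :=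
  (∀ φ, v (.neg φ) ↔ ¬ v φ) ∧ (∀ φ ψ, v (.conj φ ψ) ↔ (v φ ∧ v ψ))

/-- Propositional (PL) tautologies. -/
def Taut (φ : EForm) : Prop := ∀ v, BoolEval v → v φ

/-- The proof system **E**: all PL tautologies, the axiom schemata
K, 4, 5, COK, Id, Sh, Abs, Nec, Ext, closed under modus ponens and
the necessitation rule. -/
inductive EThm : EForm → Prop where
  | taut {φ} : Taut φ → EThm φ
  | axK (φ ψ) : EThm ((EForm.box (φ.impl ψ)).impl ((EForm.box φ).impl (EForm.box ψ)))
  | ax4 (φ) : EThm ((EForm.box φ).impl (EForm.box (EForm.box φ)))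
  | ax5 (φ) : EThm ((EForm.neg (EForm.box φ)).impl (EForm.box (EForm.neg (EForm.box φ))))
  | cok (φ ψ χ) : EThm ((EForm.ob (ψ.impl χ) φ).impl ((EForm.ob ψ φ).impl (EForm.ob χ φ)))
  | id (φ) : EThm (EForm.ob φ φ)
  | sh (φ ψ χ) : EThm ((EForm.ob χ (EForm.conj φ ψ)).impl (EForm.ob (ψ.impl χ) φ))
  | abs (φ ψ) : EThm ((EForm.ob ψ φ).impl (EForm.box (EForm.ob ψ φ)))
  | necAx (φ ψ) : EThm ((EForm.box ψ).impl (EForm.ob ψ φ))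
  | ext (φ ψ χ) : EThm ((EForm.box (φ.iff' ψ)).impl ((EForm.ob χ φ).iff' (EForm.ob χ ψ)))
  | mp {φ ψ} : EThm (φ.impl ψ) → EThm φ → EThm ψ
  | nec {φ} : EThm φ → EThm (EForm.box φ)

/-!
Soundness is proved by induction on derivations, checking each axiom schema and each rule
semantically. Truth of `□φ` and `○(ψ/φ)` does not depend on the world of evaluation, which
validates 4, 5 and Abs. An optimal `φ`-world that satisfies `ψ` is an optimal `φ ∧ ψ`-world,
which validates Sh, and `opt_≽` only depends on the truth set of its argument, which validates Ext.
-/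

namespace PrefModel

variable (M : PrefModel)

/-- `w ∈ opt_≽(‖φ‖)`. -/
def IsOptimal (φ : EForm) (w : M.W) : Prop :=
  M.sat w φ ∧ ∀ y, M.sat y φ → M.R w y

variable {M} {s : M.W} {φ ψ : EForm}

@[simp]
theorem sat_neg : M.sat s (.neg φ) ↔ ¬ M.sat s φ := Iff.rfl

@[simp]
theorem sat_conj : M.sat s (.conj φ ψ) ↔ M.sat s φ ∧ M.sat s ψ := Iff.rfl

@[simp]
theorem sat_box : M.sat s (.box φ) ↔ ∀ t, M.sat t φ := Iff.rfl

theorem sat_ob : M.sat s (.ob ψ φ) ↔ ∀ w, M.IsOptimal φ w → M.sat w ψ := Iff.rfl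

@[simp]
theorem sat_impl : M.sat s (φ.impl ψ) ↔ (M.sat s φ → M.sat s ψ) := by
  simp only [EForm.impl, sat_neg, sat_conj, not_and, not_not]

@[simp]
theorem sat_iff' : M.sat s (φ.iff' ψ) ↔ (M.sat s φ ↔ M.sat s ψ) := by
  simp only [EForm.iff', sat_conj, sat_impl, iff_def]

theorem sat_box_congr_world (t : M.W) : M.sat s (.box φ) ↔ M.sat t (.box φ) := Iff.rfl

theorem sat_ob_congr_world (t : M.W) : M.sat s (.ob ψ φ) ↔ M.sat t (.ob ψ φ) := Iff.rfl

theorem IsOptimal.conj {w : M.W} (hw : M.IsOptimal φ w) (hψ : M.sat w ψ) :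
    M.IsOptimal (.conj φ ψ) w :=
  ⟨⟨hw.1, hψ⟩, fun y hy => hw.2 y hy.1⟩

theorem isOptimal_congr (h : ∀ t, M.sat t φ ↔ M.sat t ψ) (w : M.W) :
    M.IsOptimal φ w ↔ M.IsOptimal ψ w := by
  simp only [IsOptimal, h]

end PrefModel

open PrefModel

theorem Taut.eValid {φ : EForm} (h : Taut φ) : EValid φ :=
  fun M s => h (M.sat s) ⟨fun _ => Iff.rfl, fun _ _ => Iff.rfl⟩

theorem EValid.mp {φ ψ : EForm} (hφψ : EValid (φ.impl ψ)) (hφ : EValid φ) : EValid ψ :=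
  fun M s => sat_impl.1 (hφψ M s) (hφ M s)

theorem EValid.box {φ : EForm} (h : EValid φ) : EValid (.box φ) :=
  fun M _ t => h M t

theorem eValid_axK (φ ψ : EForm) :
    EValid ((EForm.box (φ.impl ψ)).impl ((EForm.box φ).impl (EForm.box ψ))) := by
  intro M s
  simp only [sat_impl, sat_box]
  exact fun hφψ hφ t => hφψ t (hφ t)

theorem eValid_ax4 (φ : EForm) : EValid ((EForm.box φ).impl (EForm.box (EForm.box φ))) :=
  fun _ _ => sat_impl.2 fun h t => (sat_box_congr_world t).1 h

theorem eValid_ax5 (φ : EForm) :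
    EValid ((EForm.neg (EForm.box φ)).impl (EForm.box (EForm.neg (EForm.box φ)))) :=
  fun _ _ => sat_impl.2 fun h t => sat_neg.2 fun ht => h ((sat_box_congr_world t).2 ht)

theorem eValid_cok (φ ψ χ : EForm) :
    EValid ((EForm.ob (ψ.impl χ) φ).impl ((EForm.ob ψ φ).impl (EForm.ob χ φ))) := by
  intro M s
  simp only [sat_impl, sat_ob]
  exact fun hψχ hψ w hw => hψχ w hw (hψ w hw)

theorem eValid_id (φ : EForm) : EValid (EForm.ob φ φ) :=
  fun _ _ => sat_ob.2 fun _ hw => hw.1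

theorem eValid_sh (φ ψ χ : EForm) :
    EValid ((EForm.ob χ (EForm.conj φ ψ)).impl (EForm.ob (ψ.impl χ) φ)) := by
  intro M s
  simp only [sat_impl, sat_ob]
  exact fun h w hw hψ => h w (hw.conj hψ)

theorem eValid_abs (φ ψ : EForm) : EValid ((EForm.ob ψ φ).impl (EForm.box (EForm.ob ψ φ))) :=
  fun _ _ => sat_impl.2 fun h t => (sat_ob_congr_world t).1 h

theorem eValid_necAx (φ ψ : EForm) : EValid ((EForm.box ψ).impl (EForm.ob ψ φ)) :=
  fun _ _ => sat_impl.2 fun h => sat_ob.2 fun w _ => h w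

theorem eValid_ext (φ ψ χ : EForm) :
    EValid ((EForm.box (φ.iff' ψ)).impl ((EForm.ob χ φ).iff' (EForm.ob χ ψ))) := by
  intro M s
  simp only [sat_impl, sat_box, sat_iff', sat_ob]
  intro h
  simp only [isOptimal_congr h]

/-- **Soundness of Åqvist's system E**: every formula derivable in the proof
system E is valid in the class of all preference models. -/
theorem E_soundness : ∀ φ : EForm, EThm φ → EValid φ := by
  intro φ h
  induction h with
  | taut h => exact h.eValid
  | axK φ ψ => exact eValid_axK φ ψ
  | ax4 φ => exact eValid_ax4 φ
  | ax5 φ => exact eValid_ax5 φ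
  | cok φ ψ χ => exact eValid_cok φ ψ χ
  | id φ => exact eValid_id φ
  | sh φ ψ χ => exact eValid_sh φ ψ χ
  | abs φ ψ => exact eValid_abs φ ψ
  | necAx φ ψ => exact eValid_necAx φ ψ
  | ext φ ψ χ => exact eValid_ext φ ψ χ
  | mp _ _ ihφψ ihφ => exact ihφψ.mp ihφ
  | nec _ ih => exact ih.box
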